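/- Let α : ℝ² → (0,∞) be C² and ℤ²-periodic, and let r⁰ : ℝ² → (0,∞) be C³ and ℤ²-periodic with −∂²_{y₁} r⁰ − ∂²_{y₂}(α r⁰) = 0 on ℝ². Let s > 0 satisfy s·|∂³_{y₁} r⁰ + α ∂_{y₁}∂²_{y₂} r⁰| ≤ 1/2 on ℝ², and define v := s ∂_{y₁} r⁰, w := 1 + ∂²_{y₁} v + α ∂²_{y₂} v, a₁ := 1/w, and r := w r⁰. Then ∫_{[0,1]²} a₁(y) r(y) ∂_{y₁} v(y) dy = −s ∫_{[0,1]²} (∂_{y₁} r⁰(y))² dy. In particular, if ∂_{y₁} r⁰ is not identically zero, then ∫_{[0,1]²} a₁ r ∂_{y₁} v dy < 0. -/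

import Mathlib

open MeasureTheory

/-- The unit cube `[0,1]^n` in `ℝ^n`. -/
def unitCube (n : ℕ) : Set (Fin n → ℝ) := Set.Icc 0 1

/-- Partial derivative `∂_{y_i} f`. -/
noncomputable def pd {n : ℕ} (f : (Fin n → ℝ) → ℝ) (i : Fin n) : (Fin n → ℝ) → ℝ :=
  fun y => fderiv ℝ f y (Pi.single i 1)

/-- Second partial derivative `∂_{y_i} ∂_{y_j} f`. -/
noncomputable def pd2 {n : ℕ} (f : (Fin n → ℝ) → ℝ) (i j : Fin n) : (Fin n → ℝ) → ℝ :=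
  pd (pd f j) i

/-- Third partial derivative `∂_{y_i} ∂_{y_j} ∂_{y_k} f`. -/
noncomputable def pd3 {n : ℕ} (f : (Fin n → ℝ) → ℝ) (i j k : Fin n) : (Fin n → ℝ) → ℝ :=
  pd (pd (pd f k) j) i

/-- `ℤ^n`-periodicity. -/
def ZPeriodic {n : ℕ} (f : (Fin n → ℝ) → ℝ) : Prop :=
  ∀ (y : Fin n → ℝ) (z : Fin n → ℤ), f (y + fun i => (z i : ℝ)) = f y

/-- Admissible matrix field: C², periodic, symmetric, uniformly elliptic. -/
def IsAdmissible {n : ℕ} (a : Fin n → Fin n → (Fin n → ℝ) → ℝ) : Prop :=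
  (∀ i j, ContDiff ℝ 2 (a i j)) ∧
  (∀ i j, ZPeriodic (a i j)) ∧
  (∀ i j y, a i j y = a j i y) ∧
  ∃ lam Lam : ℝ, 0 < lam ∧ lam ≤ Lam ∧
    ∀ (y ξ : Fin n → ℝ),
      lam * (∑ i, ξ i ^ 2) ≤ ∑ i, ∑ j, a i j y * ξ i * ξ j ∧
      ∑ i, ∑ j, a i j y * ξ i * ξ j ≤ Lam * (∑ i, ξ i ^ 2)

/-- Corrector pair `(v^{kl}, ā_{kl})`. -/
def IsCorrector {n : ℕ} (a : Fin n → Fin n → (Fin n → ℝ) → ℝ)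
    (k l : Fin n) (v : (Fin n → ℝ) → ℝ) (abar : ℝ) : Prop :=
  ContDiff ℝ 2 v ∧ ZPeriodic v ∧
  ∀ y, -(∑ i, ∑ j, a i j y * pd2 v i j y) - a k l y = -abar

/-- Invariant measure for the matrix field `a`. -/
def IsInvariantMeasure {n : ℕ} (a : Fin n → Fin n → (Fin n → ℝ) → ℝ)
    (r : (Fin n → ℝ) → ℝ) : Prop :=
  ContDiff ℝ 2 r ∧ ZPeriodic r ∧ (∀ y, 0 < r y) ∧
  (∀ y, ∑ i, ∑ j, pd2 (fun x => a i j x * r x) i j y = 0) ∧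
  ∫ y in unitCube n, r y = 1

/-- `u` is Cᵐ on a neighborhood of the closure of `U`, with all partial
derivatives up to order `m` bounded there. -/
def SmoothBounded {n : ℕ} (m : ℕ) (U : Set (Fin n → ℝ)) (u : (Fin n → ℝ) → ℝ) : Prop :=
  ∃ V : Set (Fin n → ℝ), IsOpen V ∧ closure U ⊆ V ∧ ContDiffOn ℝ m u V ∧
    ∀ k : ℕ, k ≤ m → ∃ M : ℝ, ∀ x ∈ V, ‖iteratedFDerivWithin ℝ k u V x‖ ≤ M

/-!
Because `s |∂₁³r⁰ + α ∂₁∂₂²r⁰| ≤ 1/2`, the weight `w = 1 + s (∂₁³r⁰ + α ∂₁∂₂²r⁰)` is positive, so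
`a₁ = 1/w` cancels the factor `w` of `r = w r⁰` and the integrand is `s r⁰ ∂₁²r⁰`. Integrating by
parts over the period cell, where periodicity removes the boundary terms, turns this into
`-s ∫ (∂₁r⁰)²`. The last integral is positive once `∂₁r⁰ ≢ 0`: by periodicity `∂₁r⁰` is nonzero
somewhere in the closed cell, hence on an open subset of the open cell.
-/

open Set

lemma pd_contDiff {n m : ℕ} {N : WithTop ℕ∞} {f : (Fin n → ℝ) → ℝ}
    (hf : ContDiff ℝ N f) (h : (m : WithTop ℕ∞) + 1 ≤ N) (i : Fin n) :
    ContDiff ℝ m (pd f i) :=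
  (hf.fderiv_right h).clm_apply contDiff_const

lemma pd_const_mul {n : ℕ} {f : (Fin n → ℝ) → ℝ} (hf : Differentiable ℝ f) (c : ℝ)
    (i : Fin n) : pd (fun x => c * f x) i = fun y => c * pd f i y := by
  ext y
  simp [pd, fderiv_const_mul (hf y)]

lemma pd_mul {n : ℕ} {f g : (Fin n → ℝ) → ℝ} {y : Fin n → ℝ} (hf : DifferentiableAt ℝ f y)
    (hg : DifferentiableAt ℝ g y) (i : Fin n) :
    pd (fun x => f x * g x) i y = pd f i y * g y + f y * pd g i y := by
  simp only [pd, fderiv_fun_mul hf hg, add_apply, smul_apply, smul_eq_mul]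
  ring

lemma pd2_comm {n : ℕ} {f : (Fin n → ℝ) → ℝ} (hf : ContDiff ℝ 2 f) (i j : Fin n) :
    pd2 f i j = pd2 f j i := by
  ext y
  have hd : DifferentiableAt ℝ (fderiv ℝ f) y :=
    (hf.fderiv_right (m := 1) le_rfl).differentiable one_ne_zero y
  have hpd2 (i j : Fin n) :
      pd2 f i j y = fderiv ℝ (fderiv ℝ f) y (Pi.single i 1) (Pi.single j 1) := by
    change fderiv ℝ (fun x => fderiv ℝ f x ((fun _ => (Pi.single j 1 : Fin n → ℝ)) x)) y _ = _
    rw [fderiv_clm_apply hd (differentiableAt_const _)]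
    simp
  rw [hpd2, hpd2]
  exact hf.contDiffAt.isSymmSndFDerivAt (by simp) _ _

lemma pd3_rotate {n : ℕ} {f : (Fin n → ℝ) → ℝ} (hf : ContDiff ℝ 3 f) (i j k : Fin n) :
    pd3 f i j k = pd3 f k i j :=
  calc pd3 f i j k = pd (pd2 f j k) i := rfl
    _ = pd2 (pd f j) i k := by rw [pd2_comm (hf.of_le (by norm_num)) j k]; rfl
    _ = pd2 (pd f j) k i := by rw [pd2_comm (pd_contDiff hf (by norm_num) j)]
    _ = pd3 f k i j := rfl

lemma Fin.insertNth_one_eq_insertNth_zero_add {m : ℕ} (i : Fin (m + 1)) (x : Fin m → ℝ) :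
    Fin.insertNth i (1 : ℝ) x
      = Fin.insertNth i (0 : ℝ) x + fun k => ((Pi.single i 1 : Fin (m + 1) → ℤ) k : ℝ) := by
  ext k
  rcases Fin.eq_self_or_eq_succAbove i k with rfl | ⟨k, rfl⟩ <;> simp

namespace ZPeriodic

variable {n : ℕ} {f g : (Fin n → ℝ) → ℝ}

lemma mul (hf : ZPeriodic f) (hg : ZPeriodic g) : ZPeriodic (fun y => f y * g y) :=
  fun y z => by simp only [hf y z, hg y z]

lemma pd (hf : ZPeriodic f) (i : Fin n) : ZPeriodic (pd f i) := by
  intro y z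
  have hshift : (fun x => f (x + fun k => (z k : ℝ))) = f := funext fun x => hf x z
  simp only [_root_.pd, ← fderiv_comp_add_right, hshift]

theorem integral_pd_eq_zero (hf : ZPeriodic f) (hC : ContDiff ℝ 1 f) (i : Fin n) :
    ∫ y in unitCube n, _root_.pd f i y = 0 := by
  obtain ⟨m, rfl⟩ : ∃ m, n = m + 1 := Nat.exists_eq_add_one_of_ne_zero i.pos.ne'
  -- divergence theorem for the field `f eᵢ`, whose two faces normal to `eᵢ` differ by `eᵢ ∈ ℤⁿ`
  have hdivergence : (fun x => ∑ j, (if j = i then fderiv ℝ f else 0) x (Pi.single j 1))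
      = _root_.pd f i := by
    ext x
    rw [Finset.sum_eq_single i (fun j _ h => by simp [h]) (by simp)]
    simp [_root_.pd]
  have hfaces (j : Fin (m + 1)) (x : Fin m → ℝ) :
      (if j = i then f else 0) (j.insertNth (1 : ℝ) x)
        = (if j = i then f else 0) (j.insertNth (0 : ℝ) x) := by
    rcases eq_or_ne j i with rfl | h
    · simpa [Fin.insertNth_one_eq_insertNth_zero_add] using hf _ _
    · simp [h]
  have hdiv := integral_divergence_of_hasFDerivAt_off_countable' (0 : Fin (m + 1) → ℝ) 1
    zero_le_one (fun j => if j = i then f else 0) (fun j => if j = i then fderiv ℝ f else 0)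
    ∅ countable_empty
    (fun j => by
      rcases eq_or_ne j i with rfl | h
      · simpa using hC.continuous.continuousOn
      · simp only [if_neg h]
        exact continuousOn_const)
    (fun x _ j => by
      rcases eq_or_ne j i with rfl | h
      · simpa using (hC.differentiable one_ne_zero x).hasFDerivAt
      · simp only [if_neg h]
        exact hasFDerivAt_const 0 x)
    (by rw [hdivergence]; exact (pd_contDiff (m := 0) hC (by simp) i).continuous.integrableOn_Icc)
  simp only [hdivergence, Pi.one_apply, Pi.zero_apply, hfaces, sub_self,
    Finset.sum_const_zero] at hdiv
  exact hdiv

theorem integral_mul_pd_eq_neg (hf : ZPeriodic f) (hg : ZPeriodic g) (hfC : ContDiff ℝ 1 f)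
    (hgC : ContDiff ℝ 1 g) (i : Fin n) :
    ∫ y in unitCube n, f y * _root_.pd g i y = -∫ y in unitCube n, _root_.pd f i y * g y := by
  have hpd : _root_.pd (fun x => f x * g x) i
      = fun y => _root_.pd f i y * g y + f y * _root_.pd g i y :=
    funext fun y => pd_mul (hfC.differentiable one_ne_zero y) (hgC.differentiable one_ne_zero y) i
  have hzero := (hf.mul hg).integral_pd_eq_zero (hfC.mul hgC) i
  have hf' := (pd_contDiff (m := 0) hfC (by simp) i).continuous
  have hg' := (pd_contDiff (m := 0) hgC (by simp) i).continuous
  simp only [hpd, unitCube] at hzero ⊢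
  rw [integral_add (f := fun y => _root_.pd f i y * g y) (g := fun y => f y * _root_.pd g i y)
    (hf'.mul hgC.continuous).integrableOn_Icc (hfC.continuous.mul hg').integrableOn_Icc] at hzero
  linarith

lemma exists_mem_unitCube_eq (hf : ZPeriodic f) (y : Fin n → ℝ) :
    ∃ y' ∈ unitCube n, f y' = f y := by
  refine ⟨fun k => Int.fract (y k),
    ⟨fun k => Int.fract_nonneg _, fun k => (Int.fract_lt_one _).le⟩, ?_⟩
  rw [← hf _ fun k => ⌊y k⌋]
  congr 1
  ext k
  simp [Int.fract_add_floor]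

lemma setIntegral_unitCube_pos (hf : ZPeriodic f) (hc : Continuous f) (hnn : 0 ≤ f)
    (hne : ∃ y, f y ≠ 0) : 0 < ∫ y in unitCube n, f y := by
  obtain ⟨y₀, hy₀⟩ := hne
  obtain ⟨y, hy, hfy⟩ := hf.exists_mem_unitCube_eq y₀
  set U : Set (Fin n → ℝ) := univ.pi fun _ => Ioo 0 1
  have hU : IsOpen U := isOpen_set_pi finite_univ fun _ _ => isOpen_Ioo
  have hclosure : closure U = unitCube n := by
    simp only [U, closure_pi_set, closure_Ioo zero_ne_one, pi_univ_Icc]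
    rfl
  have hmeet : (Function.support f ∩ U).Nonempty :=
    mem_closure_iff.1 (hclosure ▸ hy) _ hc.isOpen_support (by simpa [hfy] using hy₀)
  rw [unitCube, setIntegral_pos_iff_support_of_nonneg_ae (ae_of_all _ hnn) hc.integrableOn_Icc]
  exact ((hc.isOpen_support.inter hU).measure_pos volume hmeet).trans_le
    (measure_mono (inter_subset_inter_right _ (subset_closure.trans hclosure.le)))

end ZPeriodic

theorem coefficient_formula_general
    (α : (Fin 2 → ℝ) → ℝ)
    (r0 : (Fin 2 → ℝ) → ℝ) (hr0C : ContDiff ℝ 3 r0) (hr0per : ZPeriodic r0)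
    (s : ℝ) (hs : 0 < s)
    (hsmall : ∀ y, s * |pd3 r0 0 0 0 y + α y * pd3 r0 0 1 1 y| ≤ 1 / 2)
    (v w a₁ r : (Fin 2 → ℝ) → ℝ)
    (hv : ∀ y, v y = s * pd r0 0 y)
    (hw : ∀ y, w y = 1 + pd2 v 0 0 y + α y * pd2 v 1 1 y)
    (ha₁ : ∀ y, a₁ y = (w y)⁻¹)
    (hrdef : ∀ y, r y = w y * r0 y) :
    (∫ y in unitCube 2, a₁ y * r y * pd v 0 y)
        = -s * ∫ y in unitCube 2, (pd r0 0 y) ^ 2 ∧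
    (¬ (∀ y, pd r0 0 y = 0) → (∫ y in unitCube 2, a₁ y * r y * pd v 0 y) < 0) := by
  have hr0' : ContDiff ℝ 2 (pd r0 0) := pd_contDiff hr0C (by norm_num) 0
  have hpdv (i : Fin 2) : pd v i = fun y => s * pd2 r0 i 0 y := by
    rw [funext hv, pd_const_mul (hr0'.differentiable two_ne_zero)]
    rfl
  have hpd2v (i : Fin 2) : pd2 v i i = fun y => s * pd3 r0 i i 0 y := by
    have hC : ContDiff ℝ 1 (pd2 r0 i 0) := pd_contDiff hr0' (by norm_num) i
    rw [pd2, hpdv, pd_const_mul (hC.differentiable one_ne_zero)]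
    rfl
  have hw_pos (y) : 0 < w y := by
    have hneg := neg_abs_le (s * (pd3 r0 0 0 0 y + α y * pd3 r0 0 1 1 y))
    rw [abs_mul, abs_of_pos hs] at hneg
    rw [hw, hpd2v, hpd2v, pd3_rotate hr0C 1 1 0]
    linarith [hsmall y]
  have hintegrand (y) : a₁ y * r y * pd v 0 y = s * (r0 y * pd (pd r0 0) 0 y) := by
    rw [ha₁, hrdef, hpdv]
    field_simp [(hw_pos y).ne']
    rfl
  have hformula : ∫ y in unitCube 2, a₁ y * r y * pd v 0 y
      = -s * ∫ y in unitCube 2, (pd r0 0 y) ^ 2 := by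
    simp_rw [hintegrand, integral_const_mul, hr0per.integral_mul_pd_eq_neg (hr0per.pd 0)
      (hr0C.of_le (by norm_num)) (hr0'.of_le (by norm_num)), sq]
    ring
  refine ⟨hformula, fun hne => ?_⟩
  have hpos : 0 < ∫ y in unitCube 2, (pd r0 0 y) ^ 2 :=
    ZPeriodic.setIntegral_unitCube_pos (fun y z => by simp only [hr0per.pd 0 y z])
      (hr0'.continuous.pow 2) (fun y => sq_nonneg _)
      (by simpa using not_forall.1 hne)
  rw [hformula, neg_mul, neg_lt_zero]
  exact mul_pos hs hpos

/-- in the explicit construction of Proposition 3.1, the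
homogenization coefficient equals `−s ∫ (∂_{y₁} r⁰)²`, hence is negative when
`∂_{y₁} r⁰ ≢ 0`. -/
theorem coefficient_formula
    (α : (Fin 2 → ℝ) → ℝ) (hαC : ContDiff ℝ 2 α) (hαper : ZPeriodic α)
    (hαpos : ∀ y, 0 < α y)
    (r0 : (Fin 2 → ℝ) → ℝ) (hr0C : ContDiff ℝ 3 r0) (hr0per : ZPeriodic r0)
    (hr0pos : ∀ y, 0 < r0 y)
    (hr0pde : ∀ y, -(pd2 r0 0 0 y) - pd2 (fun x => α x * r0 x) 1 1 y = 0)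
    (s : ℝ) (hs : 0 < s)
    (hsmall : ∀ y, s * |pd3 r0 0 0 0 y + α y * pd3 r0 0 1 1 y| ≤ 1 / 2)
    (v w a₁ r : (Fin 2 → ℝ) → ℝ)
    (hv : ∀ y, v y = s * pd r0 0 y)
    (hw : ∀ y, w y = 1 + pd2 v 0 0 y + α y * pd2 v 1 1 y)
    (ha₁ : ∀ y, a₁ y = (w y)⁻¹)
    (hrdef : ∀ y, r y = w y * r0 y) :
    (∫ y in unitCube 2, a₁ y * r y * pd v 0 y)
        = -s * ∫ y in unitCube 2, (pd r0 0 y) ^ 2 ∧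
    (¬ (∀ y, pd r0 0 y = 0) → (∫ y in unitCube 2, a₁ y * r y * pd v 0 y) < 0) :=
  coefficient_formula_general α r0 hr0C hr0per s hs hsmall v w a₁ r hv hw ha₁ hrdef
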